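/- Fix c₁ > 0 and c₀ ∈ ℝ. For real u and v with v > 0, the point s = u + iv satisfies Im J_{c₁,c₀}(s) = 0 if and only if c₁·v < π and u² = 1/4 + v·cot(c₁·v) − v². -/

import Mathlib

/-- The map `J_{c₁,c₀}(s) = c₁·s + c₀ − Log((s − 1/2)/(s + 1/2))`, with the principal branch of
the complex logarithm. -/
noncomputable def Jmap (c₁ c₀ : ℝ) (s : ℂ) : ℂ :=
  c₁ * s + c₀ - Complex.log ((s - 1/2) / (s + 1/2))

/-!
`Im J(s) = c₁ v − arg w` with `w = (s − 1/2)/(s + 1/2)`, and `Im w = v / |s + 1/2|² > 0`,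
so the real locus is `arg w = c₁ v`. A point of the upper half plane has argument `θ` exactly
when `θ ∈ (0, π)` and `cot θ = Re w / Im w`, and here `Re w / Im w = (u² + v² − 1/4) / v`.
-/

open Complex

namespace Complex

theorem arg_eq_iff_of_im_pos {w : ℂ} (hw : 0 < w.im) {θ : ℝ} :
    arg w = θ ↔ θ ∈ Set.Ioo 0 Real.pi ∧ Real.cot θ = w.re / w.im := by
  have hw0 : w ≠ 0 := fun h => by simp [h] at hw
  constructor
  · rintro rfl
    have harg_ne : arg w ≠ 0 := fun h => hw.ne' (arg_eq_zero_iff.mp h).2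
    have harg_lt : arg w < Real.pi := arg_lt_pi_iff.mpr (Or.inr hw.ne')
    refine ⟨⟨(arg_nonneg_iff.mpr hw.le).lt_of_ne' harg_ne, harg_lt⟩, ?_⟩
    have hnorm : 0 < ‖w‖ := norm_pos_iff.mpr hw0
    rw [Real.cot_eq_cos_div_sin, cos_arg hw0, sin_arg]
    field_simp
  · rintro ⟨⟨hθ₀, hθπ⟩, hcot⟩
    have hsin : 0 < Real.sin θ := Real.sin_pos_of_pos_of_lt_pi hθ₀ hθπ
    have hre : w.re = w.im / Real.sin θ * Real.cos θ := by
      rw [Real.cot_eq_cos_div_sin, eq_div_iff hw.ne'] at hcot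
      rw [← hcot]
      ring
    have hpolar : w = ↑(w.im / Real.sin θ) * (cos θ + sin θ * I) := by
      apply Complex.ext <;> simp [← ofReal_cos, ← ofReal_sin, hre, hsin.ne']
    have hθ_mem : θ ∈ Set.Ioc (-Real.pi) Real.pi := ⟨by linarith [Real.pi_pos], hθπ.le⟩
    rw [hpolar, arg_mul_cos_add_sin_mul_I (div_pos hw hsin) hθ_mem]

end Complex

theorem Jmap_im (c₁ c₀ : ℝ) (s : ℂ) :
    (Jmap c₁ c₀ s).im = c₁ * s.im - arg ((s - 1/2) / (s + 1/2)) := by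
  simp [Jmap, log_im]

theorem sub_half_div_add_half_im (s : ℂ) :
    ((s - 1/2) / (s + 1/2)).im = s.im / normSq (s + 1/2) := by
  rw [div_im]
  simp only [sub_im, add_im, sub_re, add_re, one_div, inv_re, inv_im, re_ofNat, im_ofNat,
    normSq_ofNat, div_self_mul_self', neg_zero, zero_div, sub_zero, add_zero]
  ring

theorem sub_half_div_add_half_re (s : ℂ) :
    ((s - 1/2) / (s + 1/2)).re = (normSq s - 1/4) / normSq (s + 1/2) := by
  rw [div_re]
  simp only [sub_im, add_im, sub_re, add_re, one_div, inv_re, inv_im, re_ofNat, im_ofNat,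
    normSq_ofNat, div_self_mul_self', normSq_apply, neg_zero, zero_div, sub_zero, add_zero]
  ring

theorem Jmap_real_locus
    (c₁ c₀ : ℝ) (hc₁ : 0 < c₁) (u v : ℝ) (hv : 0 < v) :
    (Jmap c₁ c₀ (Complex.mk u v)).im = 0 ↔
      c₁ * v < Real.pi ∧ u ^ 2 = 1/4 + v * Real.cot (c₁ * v) - v ^ 2 := by
  set s : ℂ := ⟨u, v⟩
  have hN : 0 < normSq (s + 1/2) :=
    normSq_pos.mpr fun h => by simpa [s, hv.ne'] using congrArg im h
  have hratio : ((s - 1/2) / (s + 1/2)).re / ((s - 1/2) / (s + 1/2)).im =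
      (u^2 + v^2 - 1/4) / v := by
    rw [sub_half_div_add_half_re, sub_half_div_add_half_im, div_div_div_cancel_right₀ hN.ne']
    simp [s, normSq_apply, sq]
  have hw : 0 < ((s - 1/2) / (s + 1/2)).im := by rw [sub_half_div_add_half_im]; exact div_pos hv hN
  rw [Jmap_im, show s.im = v from rfl, sub_eq_zero, eq_comm, arg_eq_iff_of_im_pos hw, hratio,
    eq_div_iff hv.ne']
  simp only [Set.mem_Ioo, mul_pos hc₁ hv, true_and]
  exact and_congr_right fun _ => ⟨fun h => by linarith, fun h => by linarith⟩
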